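/- arXiv:2005.00293 — 5 statements merged into one kernel-verified Lean document; each statement's English description precedes it below -/
import Mathlib

section
/- Power balance for the in-domain actuated vibrating string: Let w : [0,L] × [0,∞) → ℝ be such that the partial derivatives w_t, w_z, w_tt, w_tz exist and are continuous on [0,L] × [0,∞), for every t ≥ 0 the map z ↦ w_z(z,t) is differentiable at every z ∈ (0,L) with z ∉ {L_{p1}, L_{p2}}, and suppose ρ·w_tt(z,t) = T·∂_z w_z(z,t) + g(z)·u(t) holds for all such z and all t ≥ 0, where u : [0,∞) → ℝ is continuous, together with the boundary conditions w(0,t) = 0 and w_z(L,t) = 0 for all t ≥ 0. Then the energy functional H(t) = ∫₀^L ( (ρ/2)·w_t(z,t)² + (T/2)·w_z(z,t)² ) dz is differentiable in t and satisfies H'(t) = u(t)·∫_{L_{p1}}^{L_{p2}} w_t(z,t) dz. -/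
/-!
The energy density `(ρ/2) w_t² + (T/2) w_z²` is differentiated under the integral sign. Its time
derivative involves `∂_t w_z`, which equals the given `w_tz = ∂_z w_t`: differentiating
`z ↦ ∫₀ˢ w_t(z, x) dx = w(z, s) - w(z, 0)` in `z` once under the integral and once through the
right-hand side gives `w_z(z, s) - w_z(z, 0) = ∫₀ˢ w_tz(z, x) dx`. Away from the actuator edges the
PDE turns the power density `ρ w_t w_tt + T w_z w_tz` into `∂_z (T w_t w_z) + g u w_t`; the
boundary term vanishes since `w_t(0, ·) = 0` and `w_z(L, ·) = 0`, leaving `u ∫_{Lp1}^{Lp2} w_t`.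
-/

open Real MeasureTheory Set Function

section Rectangle

variable {a b c d : ℝ}

theorem ContinuousOn.comp_projIcc {φ : ℝ → ℝ} (hcd : c ≤ d) (hφ : ContinuousOn φ (Icc c d)) :
    Continuous fun x => φ (projIcc c d hcd x) :=
  hφ.comp_continuous (continuous_subtype_val.comp continuous_projIcc) fun x => (projIcc c d hcd x).2

theorem ContinuousOn.hasDerivWithinAt_intervalIntegral {φ : ℝ → ℝ} (hφ : ContinuousOn φ (Icc c d))
    {t : ℝ} (ht : t ∈ Icc c d) :
    HasDerivWithinAt (fun s => ∫ x in c..s, φ x) (φ t) (Icc c d) t := by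
  have hcd : c ≤ d := ht.1.trans ht.2
  have hext : ∀ x ∈ Icc c d, φ (projIcc c d hcd x) = φ x := fun x hx => by
    rw [projIcc_of_mem hcd hx]
  have key := ((hφ.comp_projIcc hcd).integral_hasStrictDerivAt c t).hasDerivAt.hasDerivWithinAt
    (s := Icc c d)
  rw [hext t ht] at key
  refine key.congr_of_mem (fun s hs => intervalIntegral.integral_congr fun x hx => ?_) ht
  rw [uIcc_of_le hs.1] at hx
  exact (hext x ⟨hx.1, hx.2.trans hs.2⟩).symm

theorem ContinuousOn.continuousOn_intervalIntegral_prod {f : ℝ → ℝ → ℝ} (hab : a ≤ b)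
    (hcd : c ≤ d) (hf : ContinuousOn (uncurry f) (Icc a b ×ˢ Icc c d)) :
    ContinuousOn (fun z => ∫ x in c..d, f z x) (Icc a b) := by
  set f' : ℝ → ℝ → ℝ := fun z x => f (projIcc a b hab z) (projIcc c d hcd x)
  have hf' : Continuous (uncurry f') :=
    hf.comp_continuous
      (f := fun p : ℝ × ℝ => ((projIcc a b hab p.1 : ℝ), (projIcc c d hcd p.2 : ℝ))) (by fun_prop)
      fun p => ⟨(projIcc a b hab p.1).2, (projIcc c d hcd p.2).2⟩
  refine (intervalIntegral.continuous_parametric_intervalIntegral_of_continuous' hf' c d)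
    |>.continuousOn.congr fun z hz => intervalIntegral.integral_congr fun x hx => ?_
  rw [uIcc_of_le hcd] at hx
  simp only [f', projIcc_of_mem hab hz, projIcc_of_mem hcd hx]

theorem intervalIntegral_integral_swap_of_continuousOn {f : ℝ → ℝ → ℝ} (hab : a ≤ b) (hcd : c ≤ d)
    (hf : ContinuousOn (uncurry f) (Icc a b ×ˢ Icc c d)) :
    ∫ z in a..b, ∫ x in c..d, f z x = ∫ x in c..d, ∫ z in a..b, f z x := by
  have hint : IntegrableOn (uncurry f) (Ioc a b ×ˢ Ioc c d) :=
    (hf.integrableOn_compact (isCompact_Icc.prod isCompact_Icc)).mono_set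
      (prod_mono Ioc_subset_Icc_self Ioc_subset_Icc_self)
  simp_rw [intervalIntegral.integral_of_le hab, intervalIntegral.integral_of_le hcd]
  exact integral_integral_swap (by rwa [Measure.prod_restrict])

theorem intervalIntegral_eq_sub_of_hasDerivWithinAt_Icc {F f : ℝ → ℝ} (hcd : c ≤ d)
    (hF : ∀ s ∈ Icc c d, HasDerivWithinAt F (f s) (Icc c d) s)
    (hf : IntervalIntegrable f volume c d) :
    ∫ x in c..d, f x = F d - F c :=
  intervalIntegral.integral_eq_sub_of_hasDerivAt_of_le hcd
    (fun s hs => (hF s hs).continuousWithinAt)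
    (fun s hs => (hF s (Ioo_subset_Icc_self hs)).hasDerivAt (Icc_mem_nhds hs.1 hs.2)) hf

theorem hasDerivWithinAt_intervalIntegral_of_continuousOn {F f : ℝ → ℝ → ℝ} (hab : a ≤ b)
    (hF : ∀ z ∈ Icc a b, ∀ s ∈ Icc c d, HasDerivWithinAt (F z) (f z s) (Icc c d) s)
    (hFc : IntervalIntegrable (fun z => F z c) volume a b)
    (hf : ContinuousOn (uncurry f) (Icc a b ×ˢ Icc c d)) {t : ℝ} (ht : t ∈ Icc c d) :
    HasDerivWithinAt (fun s => ∫ z in a..b, F z s) (∫ z in a..b, f z t) (Icc c d) t := by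
  have hcd : c ≤ d := ht.1.trans ht.2
  have hf_swap : ContinuousOn (uncurry fun x z => f z x) (Icc c d ×ˢ Icc a b) :=
    hf.comp continuous_swap.continuousOn fun p hp => ⟨hp.2, hp.1⟩
  have hprimitive := (hf_swap.continuousOn_intervalIntegral_prod hcd hab)
    |>.hasDerivWithinAt_intervalIntegral ht |>.const_add (∫ z in a..b, F z c)
  refine hprimitive.congr_of_mem (fun s hs => ?_) ht
  have hsub : Icc a b ×ˢ Icc c s ⊆ Icc a b ×ˢ Icc c d := prod_mono_right (Icc_subset_Icc_right hs.2)
  have hslice : ∀ z ∈ Icc a b, F z s = F z c + ∫ x in c..s, f z x := fun z hz => by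
    rw [intervalIntegral_eq_sub_of_hasDerivWithinAt_Icc hs.1
      (fun x hx => (hF z hz x ⟨hx.1, hx.2.trans hs.2⟩).mono (Icc_subset_Icc_right hs.2))
      (ContinuousOn.intervalIntegrable_of_Icc hs.1
        ((hf.uncurry_left z hz).mono (Icc_subset_Icc_right hs.2)))]
    ring
  rw [intervalIntegral.integral_congr (fun z hz => hslice z (uIcc_of_le hab ▸ hz)),
    intervalIntegral.integral_add hFc (ContinuousOn.intervalIntegrable_of_Icc hab
      ((hf.mono hsub).continuousOn_intervalIntegral_prod hab hs.1)),
    intervalIntegral_integral_swap_of_continuousOn hab hs.1 (hf.mono hsub)]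

theorem hasDerivWithinAt_mixed_partial_of_continuousOn {f fx fy fyx : ℝ → ℝ → ℝ} (hab : a < b)
    (hfx : ∀ x ∈ Icc a b, ∀ y ∈ Icc c d, HasDerivWithinAt (f · y) (fx x y) (Icc a b) x)
    (hfy : ∀ x ∈ Icc a b, ∀ y ∈ Icc c d, HasDerivWithinAt (f x) (fy x y) (Icc c d) y)
    (hfyx : ∀ x ∈ Icc a b, ∀ y ∈ Icc c d, HasDerivWithinAt (fy · y) (fyx x y) (Icc a b) x)
    (hfy_cont : ContinuousOn (uncurry fy) (Icc a b ×ˢ Icc c d))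
    (hfyx_cont : ContinuousOn (uncurry fyx) (Icc a b ×ˢ Icc c d))
    {x y : ℝ} (hx : x ∈ Icc a b) (hy : y ∈ Icc c d) :
    HasDerivWithinAt (fx x) (fyx x y) (Icc c d) y := by
  have hcd : c ≤ d := hy.1.trans hy.2
  suffices hrep : ∀ y' ∈ Icc c d, fx x y' = fx x c + ∫ s in c..y', fyx x s from
    ((hfyx_cont.uncurry_left x hx).hasDerivWithinAt_intervalIntegral hy).const_add (fx x c)
      |>.congr_of_mem hrep hy
  intro y' hy'
  have hsub : Icc c y' ⊆ Icc c d := Icc_subset_Icc_right hy'.2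
  have hfy_int : ∀ x' ∈ Icc a b, ∫ s in c..y', fy x' s = f x' y' - f x' c := fun x' hx' =>
    intervalIntegral_eq_sub_of_hasDerivWithinAt_Icc hy'.1
      (fun s hs => (hfy x' hx' s (hsub hs)).mono hsub)
      (ContinuousOn.intervalIntegrable_of_Icc hy'.1 ((hfy_cont.uncurry_left x' hx').mono hsub))
  have hunder : HasDerivWithinAt (fun x' => ∫ s in c..y', fy x' s) (∫ s in c..y', fyx x s)
      (Icc a b) x :=
    hasDerivWithinAt_intervalIntegral_of_continuousOn hy'.1
      (fun s hs x' hx' => hfyx x' hx' s (hsub hs))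
      (ContinuousOn.intervalIntegrable_of_Icc hy'.1
        ((hfy_cont.uncurry_left a (left_mem_Icc.2 hab.le)).mono hsub))
      ((hfyx_cont.mono (prod_mono_right hsub)).comp continuous_swap.continuousOn
        fun p hp => ⟨hp.2, hp.1⟩) hx
  have hdiff : HasDerivWithinAt (fun x' => ∫ s in c..y', fy x' s) (fx x y' - fx x c)
      (Icc a b) x :=
    ((hfx x hx y' hy').sub (hfx x hx c (left_mem_Icc.2 hcd))).congr_of_mem hfy_int hx
  linarith [(uniqueDiffOn_Icc hab x hx).eq_deriv _ hdiff hunder]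

theorem hasDerivWithinAt_integral_energy {ρ T t : ℝ} {w wt wz wtt wtz : ℝ → ℝ → ℝ}
    (hab : a < b)
    (hwt : ∀ z ∈ Icc a b, ∀ s ∈ Icc c d, HasDerivWithinAt (w z) (wt z s) (Icc c d) s)
    (hwz : ∀ z ∈ Icc a b, ∀ s ∈ Icc c d, HasDerivWithinAt (w · s) (wz z s) (Icc a b) z)
    (hwtt : ∀ z ∈ Icc a b, ∀ s ∈ Icc c d, HasDerivWithinAt (wt z) (wtt z s) (Icc c d) s)
    (hwtz : ∀ z ∈ Icc a b, ∀ s ∈ Icc c d, HasDerivWithinAt (wt · s) (wtz z s) (Icc a b) z)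
    (hwt_cont : ContinuousOn (uncurry wt) (Icc a b ×ˢ Icc c d))
    (hwz_cont : ContinuousOn (uncurry wz) (Icc a b ×ˢ Icc c d))
    (hwtt_cont : ContinuousOn (uncurry wtt) (Icc a b ×ˢ Icc c d))
    (hwtz_cont : ContinuousOn (uncurry wtz) (Icc a b ×ˢ Icc c d)) (ht : t ∈ Icc c d) :
    HasDerivWithinAt (fun s => ∫ z in a..b, ((ρ/2) * (wt z s)^2 + (T/2) * (wz z s)^2))
      (∫ z in a..b, (ρ * (wt z t * wtt z t) + T * (wz z t * wtz z t))) (Icc c d) t := by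
  have hc : c ∈ Icc c d := left_mem_Icc.2 (ht.1.trans ht.2)
  have hdensity : ∀ z ∈ Icc a b, ∀ s ∈ Icc c d,
      HasDerivWithinAt (fun s => (ρ/2) * (wt z s)^2 + (T/2) * (wz z s)^2)
        (ρ * (wt z s * wtt z s) + T * (wz z s * wtz z s)) (Icc c d) s := fun z hz s hs => by
    have hwz_t := hasDerivWithinAt_mixed_partial_of_continuousOn hab hwz hwt hwtz hwt_cont
      hwtz_cont hz hs
    refine ((((hwtt z hz s hs).pow 2).const_mul (ρ/2)).add
      ((hwz_t.pow 2).const_mul (T/2))).congr_deriv ?_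
    push_cast
    ring
  refine hasDerivWithinAt_intervalIntegral_of_continuousOn hab.le hdensity ?_
    ((continuousOn_const.mul (hwt_cont.mul hwtt_cont)).add
      (continuousOn_const.mul (hwz_cont.mul hwtz_cont))) ht
  exact ContinuousOn.intervalIntegrable_of_Icc hab.le <|
    (continuousOn_const.mul ((hwt_cont.uncurry_right c hc).pow 2)).add
      (continuousOn_const.mul ((hwz_cont.uncurry_right c hc).pow 2))

end Rectangle

theorem intervalIntegral_indicator_Icc {f : ℝ → ℝ} {a b p q : ℝ} (hap : a ≤ p) (hpq : p ≤ q)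
    (hqb : q ≤ b) :
    ∫ z in a..b, (Icc p q).indicator f z = ∫ z in p..q, f z := by
  rw [intervalIntegral.integral_congr_ae ((indicator_ae_eq_of_ae_eq_set
      (Ioc_ae_eq_Icc (μ := volume)).symm).mono fun z hz _ => hz),
    intervalIntegral.integral_of_le (hap.trans (hpq.trans hqb)),
    integral_indicator measurableSet_Ioc, Measure.restrict_restrict measurableSet_Ioc,
    inter_eq_left.2 (Ioc_subset_Ioc hap hqb), intervalIntegral.integral_of_le hpq]

theorem integral_power_eq_actuator_work {L T ρ p q u : ℝ} {g v v' a ε ε' : ℝ → ℝ}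
    (hL : 0 ≤ L) (hp : 0 ≤ p) (hpq : p ≤ q) (hq : q ≤ L)
    (hg : ∀ z, g z = if p ≤ z ∧ z ≤ q then 1 else 0)
    (hv : ∀ z ∈ Ioo 0 L, HasDerivAt v (v' z) z)
    (hε : ∀ z ∈ Ioo 0 L, z ≠ p → z ≠ q → HasDerivAt ε (ε' z) z)
    (hpde : ∀ z ∈ Ioo 0 L, z ≠ p → z ≠ q → ρ * a z = T * ε' z + g z * u)
    (hv0 : v 0 = 0) (hεL : ε L = 0)
    (hv_cont : ContinuousOn v (Icc 0 L)) (hv'_cont : ContinuousOn v' (Icc 0 L))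
    (ha_cont : ContinuousOn a (Icc 0 L)) (hε_cont : ContinuousOn ε (Icc 0 L)) :
    ∫ z in 0..L, (ρ * (v z * a z) + T * (ε z * v' z)) = u * ∫ z in p..q, v z := by
  have hgv : ∀ z, g z * v z = (Icc p q).indicator v z := fun z => by
    simp only [hg, indicator_apply, mem_Icc, ite_mul, one_mul, zero_mul]
  have hflux : ∀ z ∈ Ioo 0 L \ {p, q}, HasDerivAt (fun y => T * (v y * ε y))
      (ρ * (v z * a z) + T * (ε z * v' z) - u * (g z * v z)) z := by
    rintro z ⟨hz, hzpq⟩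
    have hzp : z ≠ p := fun h => hzpq (by simp [h])
    have hzq : z ≠ q := fun h => hzpq (by simp [h])
    refine (((hv z hz).mul (hε z hz hzp hzq)).const_mul T).congr_deriv ?_
    linear_combination (-v z) * hpde z hz hzp hzq
  have hpower_int : IntervalIntegrable (fun z => ρ * (v z * a z) + T * (ε z * v' z)) volume 0 L :=
    ContinuousOn.intervalIntegrable_of_Icc hL <|
      (continuousOn_const.mul (hv_cont.mul ha_cont)).add
        (continuousOn_const.mul (hε_cont.mul hv'_cont))
  have hact_int : IntervalIntegrable (fun z => u * (g z * v z)) volume 0 L := by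
    simp only [hgv]
    rw [intervalIntegrable_iff_integrableOn_Icc_of_le hL]
    exact (hv_cont.integrableOn_Icc.indicator measurableSet_Icc).const_mul u
  have hbalance := integral_eq_of_hasDerivAt_off_countable_of_le
    (fun y => T * (v y * ε y)) _ hL ((countable_singleton q).insert p)
    (continuousOn_const.mul (hv_cont.mul hε_cont)) hflux
    (hpower_int.sub hact_int)
  rw [intervalIntegral.integral_sub hpower_int hact_int, hv0, hεL,
    intervalIntegral.integral_const_mul] at hbalance
  simp only [hgv, intervalIntegral_indicator_Icc hp hpq hq] at hbalance
  linarith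

theorem power_balance_vibrating_string_general
    (L T ρ Lp1 Lp2 : ℝ)
    (hL : 0 < L)
    (hp1 : 0 ≤ Lp1) (hp12 : Lp1 < Lp2) (hp2 : Lp2 ≤ L)
    (g : ℝ → ℝ) (hg : ∀ z, g z = if Lp1 ≤ z ∧ z ≤ Lp2 then 1 else 0)
    (u : ℝ → ℝ)
    (w wt wz wtt wtz wzz : ℝ → ℝ → ℝ)
    -- existence of the partial derivatives w_t, w_z, w_tt, w_tz on [0,L] × [0,∞)
    (hwt : ∀ z ∈ Icc (0:ℝ) L, ∀ t ∈ Ici (0:ℝ),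
      HasDerivWithinAt (fun s => w z s) (wt z t) (Ici 0) t)
    (hwz : ∀ z ∈ Icc (0:ℝ) L, ∀ t ∈ Ici (0:ℝ),
      HasDerivWithinAt (fun y => w y t) (wz z t) (Icc 0 L) z)
    (hwtt : ∀ z ∈ Icc (0:ℝ) L, ∀ t ∈ Ici (0:ℝ),
      HasDerivWithinAt (fun s => wt z s) (wtt z t) (Ici 0) t)
    (hwtz : ∀ z ∈ Icc (0:ℝ) L, ∀ t ∈ Ici (0:ℝ),
      HasDerivWithinAt (fun y => wt y t) (wtz z t) (Icc 0 L) z)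
    -- continuity of the partial derivatives on [0,L] × [0,∞)
    (hwt_cont : ContinuousOn (fun q : ℝ × ℝ => wt q.1 q.2) (Icc 0 L ×ˢ Ici 0))
    (hwz_cont : ContinuousOn (fun q : ℝ × ℝ => wz q.1 q.2) (Icc 0 L ×ˢ Ici 0))
    (hwtt_cont : ContinuousOn (fun q : ℝ × ℝ => wtt q.1 q.2) (Icc 0 L ×ˢ Ici 0))
    (hwtz_cont : ContinuousOn (fun q : ℝ × ℝ => wtz q.1 q.2) (Icc 0 L ×ˢ Ici 0))
    -- differentiability of z ↦ w_z(z,t) away from the actuator edges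
    (hwzz : ∀ t ∈ Ici (0:ℝ), ∀ z ∈ Ioo (0:ℝ) L, z ≠ Lp1 → z ≠ Lp2 →
      HasDerivAt (fun y => wz y t) (wzz z t) z)
    -- the PDE ρ w_tt = T ∂_z w_z + g(z) u(t)
    (hpde : ∀ t ∈ Ici (0:ℝ), ∀ z ∈ Ioo (0:ℝ) L, z ≠ Lp1 → z ≠ Lp2 →
      ρ * wtt z t = T * wzz z t + g z * u t)
    -- boundary conditions
    (hbc0 : ∀ t ∈ Ici (0:ℝ), w 0 t = 0)
    (hbcL : ∀ t ∈ Ici (0:ℝ), wz L t = 0) :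
    ∀ t ∈ Ici (0:ℝ),
      HasDerivWithinAt
        (fun s => ∫ z in (0:ℝ)..L, ((ρ/2) * (wt z s)^2 + (T/2) * (wz z s)^2))
        (u t * ∫ z in Lp1..Lp2, wt z t) (Ici 0) t := by
  intro t ht
  -- `[0, t + 1]` is a neighbourhood of `t` in `[0, ∞)`, so a compact rectangle suffices
  have hI : Icc (0:ℝ) (t + 1) ⊆ Ici 0 := Icc_subset_Ici_self
  have hR : Icc (0:ℝ) L ×ˢ Icc 0 (t + 1) ⊆ Icc 0 L ×ˢ Ici 0 := prod_mono_right hI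
  have hH := hasDerivWithinAt_integral_energy (ρ := ρ) (T := T) hL
    (fun z hz s hs => (hwt z hz s (hI hs)).mono hI) (fun z hz s hs => hwz z hz s (hI hs))
    (fun z hz s hs => (hwtt z hz s (hI hs)).mono hI) (fun z hz s hs => hwtz z hz s (hI hs))
    (hwt_cont.mono hR) (hwz_cont.mono hR) (hwtt_cont.mono hR) (hwtz_cont.mono hR)
    (⟨ht, by linarith⟩ : t ∈ Icc 0 (t + 1))
  have hwt0 : wt 0 t = 0 :=
    (uniqueDiffOn_Ici 0 t ht).eq_deriv _ (hwt 0 (left_mem_Icc.2 hL.le) t ht)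
      ((hasDerivWithinAt_const t _ 0).congr_of_mem hbc0 ht)
  rw [integral_power_eq_actuator_work hL.le hp1 hp12.le hp2 hg
    (fun z hz => (hwtz z (Ioo_subset_Icc_self hz) t ht).hasDerivAt (Icc_mem_nhds hz.1 hz.2))
    (hwzz t ht) (hpde t ht) hwt0 (hbcL t ht) (hwt_cont.uncurry_right t ht)
    (hwtz_cont.uncurry_right t ht) (hwtt_cont.uncurry_right t ht)
    (hwz_cont.uncurry_right t ht)] at hH
  exact hH.mono_of_mem_nhdsWithin
    (Ici_inter_Iic (a := (0:ℝ)) ▸ inter_mem_nhdsWithin (Ici 0) (Iic_mem_nhds (lt_add_one t)))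

/-- Power balance for the in-domain actuated vibrating string:
`H(t) = ∫₀^L ((ρ/2) w_t² + (T/2) w_z²) dz` satisfies
`H'(t) = u(t) · ∫_{Lp1}^{Lp2} w_t dz`. -/
theorem power_balance_vibrating_string
    (L T ρ Lp1 Lp2 : ℝ)
    (hL : 0 < L) (hT : 0 < T) (hρ : 0 < ρ)
    (hp1 : 0 ≤ Lp1) (hp12 : Lp1 < Lp2) (hp2 : Lp2 ≤ L)
    (g : ℝ → ℝ) (hg : ∀ z, g z = if Lp1 ≤ z ∧ z ≤ Lp2 then 1 else 0)
    (u : ℝ → ℝ) (hu : Continuous u)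
    (w wt wz wtt wtz wzz : ℝ → ℝ → ℝ)
    -- existence of the partial derivatives w_t, w_z, w_tt, w_tz on [0,L] × [0,∞)
    (hwt : ∀ z ∈ Icc (0:ℝ) L, ∀ t ∈ Ici (0:ℝ),
      HasDerivWithinAt (fun s => w z s) (wt z t) (Ici 0) t)
    (hwz : ∀ z ∈ Icc (0:ℝ) L, ∀ t ∈ Ici (0:ℝ),
      HasDerivWithinAt (fun y => w y t) (wz z t) (Icc 0 L) z)
    (hwtt : ∀ z ∈ Icc (0:ℝ) L, ∀ t ∈ Ici (0:ℝ),
      HasDerivWithinAt (fun s => wt z s) (wtt z t) (Ici 0) t)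
    (hwtz : ∀ z ∈ Icc (0:ℝ) L, ∀ t ∈ Ici (0:ℝ),
      HasDerivWithinAt (fun y => wt y t) (wtz z t) (Icc 0 L) z)
    -- continuity of the partial derivatives on [0,L] × [0,∞)
    (hwt_cont : ContinuousOn (fun q : ℝ × ℝ => wt q.1 q.2) (Icc 0 L ×ˢ Ici 0))
    (hwz_cont : ContinuousOn (fun q : ℝ × ℝ => wz q.1 q.2) (Icc 0 L ×ˢ Ici 0))
    (hwtt_cont : ContinuousOn (fun q : ℝ × ℝ => wtt q.1 q.2) (Icc 0 L ×ˢ Ici 0))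
    (hwtz_cont : ContinuousOn (fun q : ℝ × ℝ => wtz q.1 q.2) (Icc 0 L ×ˢ Ici 0))
    -- differentiability of z ↦ w_z(z,t) away from the actuator edges
    (hwzz : ∀ t ∈ Ici (0:ℝ), ∀ z ∈ Ioo (0:ℝ) L, z ≠ Lp1 → z ≠ Lp2 →
      HasDerivAt (fun y => wz y t) (wzz z t) z)
    -- the PDE ρ w_tt = T ∂_z w_z + g(z) u(t)
    (hpde : ∀ t ∈ Ici (0:ℝ), ∀ z ∈ Ioo (0:ℝ) L, z ≠ Lp1 → z ≠ Lp2 →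
      ρ * wtt z t = T * wzz z t + g z * u t)
    -- boundary conditions
    (hbc0 : ∀ t ∈ Ici (0:ℝ), w 0 t = 0)
    (hbcL : ∀ t ∈ Ici (0:ℝ), wz L t = 0) :
    ∀ t ∈ Ici (0:ℝ),
      HasDerivWithinAt
        (fun s => ∫ z in (0:ℝ)..L, ((ρ/2) * (wt z s)^2 + (T/2) * (wz z s)^2))
        (u t * ∫ z in Lp1..Lp2, wt z t) (Ici 0) t :=
  power_balance_vibrating_string_general L T ρ Lp1 Lp2 hL hp1 hp12 hp2 g hg u w wt wz wtt wtz wzz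
    hwt hwz hwtt hwtz hwt_cont hwz_cont hwtt_cont hwtz_cont hwzz hpde hbc0 hbcL
end

section
/- Dissipativity of the observer-error operator with respect to the energy inner product: Let w : [0,L] → ℝ be twice continuously differentiable with w(0) = 0 and w'(L) = 0, and let p : [0,L] → ℝ be continuously differentiable with p(0) = 0. Then T·∫₀^L (p'(z)/ρ)·w'(z) dz + (1/ρ)·∫₀^L ( T·w''(z) − k·g(z)·∫_{L_{p1}}^{L_{p2}} p(y)/ρ dy )·p(z) dz = −k·( ∫_{L_{p1}}^{L_{p2}} p(y)/ρ dy )², and in particular this quantity is ≤ 0. -/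
open Real MeasureTheory Set

/-! Integrating by parts, `∫₀ᴸ (w'' p + w' p') = [w' p]₀ᴸ` vanishes by the boundary conditions, so
the two elastic terms cancel. Since `g` is the indicator of the actuator,
`∫₀ᴸ g p = ∫_{Lp1}^{Lp2} p`, and the damping term alone is left: `−k (∫_{Lp1}^{Lp2} p/ρ)²`. -/

theorem IntervalIntegrable.indicator {E : Type*} [NormedAddCommGroup E] {f : ℝ → E}
    {μ : Measure ℝ} {a b : ℝ} {s : Set ℝ} (hf : IntervalIntegrable f μ a b)
    (hs : MeasurableSet s) : IntervalIntegrable (s.indicator f) μ a b :=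
  ⟨hf.1.indicator hs, hf.2.indicator hs⟩

theorem intervalIntegral_indicator_Icc_s2 {E : Type*} [NormedAddCommGroup E] [NormedSpace ℝ E]
    {a b c d : ℝ} (hac : a ≤ c) (hcd : c ≤ d) (hdb : d ≤ b) (f : ℝ → E) :
    ∫ x in a..b, (Icc c d).indicator f x = ∫ x in c..d, f x := by
  have hIoc : (Ioc a b ∩ Icc c d : Set ℝ) =ᵐ[volume] Ioc c d := by
    have := (Filter.EventuallyEq.refl (ae volume) (Ioc a b)).inter
      (Ioc_ae_eq_Icc (a := c) (b := d)).symm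
    rwa [Ioc_inter_Ioc, max_eq_right hac, min_eq_right hdb] at this
  rw [intervalIntegral.integral_of_le (hac.trans (hcd.trans hdb)),
    intervalIntegral.integral_of_le hcd, setIntegral_indicator measurableSet_Icc,
    setIntegral_congr_set hIoc]

theorem integral_deriv_mul_add_integral_mul_deriv_eq_zero {a b : ℝ} (hab : a ≤ b)
    {u u' v v' : ℝ → ℝ} (hu : ∀ x ∈ Icc a b, HasDerivWithinAt u (u' x) (Icc a b) x)
    (hv : ∀ x ∈ Icc a b, HasDerivWithinAt v (v' x) (Icc a b) x)
    (hu' : ContinuousOn u' (Icc a b)) (hv' : ContinuousOn v' (Icc a b))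
    (hub : u b = 0) (hva : v a = 0) :
    (∫ x in a..b, u' x * v x) + ∫ x in a..b, u x * v' x = 0 := by
  have huc : ContinuousOn u (Icc a b) := fun x hx ↦ (hu x hx).continuousWithinAt
  have hvc : ContinuousOn v (Icc a b) := fun x hx ↦ (hv x hx).continuousWithinAt
  rw [← intervalIntegral.integral_add (f := fun x ↦ u' x * v x) (g := fun x ↦ u x * v' x)
      ((hu'.mul hvc).intervalIntegrable_of_Icc hab) ((huc.mul hv').intervalIntegrable_of_Icc hab),
    intervalIntegral.integral_deriv_mul_eq_sub_of_hasDerivWithinAt (by rwa [uIcc_of_le hab])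
      (by rwa [uIcc_of_le hab]) (hu'.intervalIntegrable_of_Icc hab)
      (hv'.intervalIntegrable_of_Icc hab), hub, hva, zero_mul, mul_zero, sub_zero]

theorem observer_error_operator_dissipative_general
    (L T ρ k Lp1 Lp2 : ℝ)
    (hk : 0 < k)
    (hp1 : 0 ≤ Lp1) (hp12 : Lp1 < Lp2) (hp2 : Lp2 ≤ L)
    (g : ℝ → ℝ) (hg : ∀ z, g z = if Lp1 ≤ z ∧ z ≤ Lp2 then 1 else 0)
    (w' w'' p p' : ℝ → ℝ)
    -- w is twice continuously differentiable on [0,L]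
    (hw' : ∀ z ∈ Icc (0:ℝ) L, HasDerivWithinAt w' (w'' z) (Icc 0 L) z)
    (hw'' : ContinuousOn w'' (Icc 0 L))
    -- p is continuously differentiable on [0,L]
    (hp : ∀ z ∈ Icc (0:ℝ) L, HasDerivWithinAt p (p' z) (Icc 0 L) z)
    (hp' : ContinuousOn p' (Icc 0 L))
    -- boundary conditions
    (hwL : w' L = 0) (hp0 : p 0 = 0) :
    T * (∫ z in (0:ℝ)..L, (p' z / ρ) * w' z)
        + (1/ρ) * (∫ z in (0:ℝ)..L,
            (T * w'' z - k * g z * ∫ y in Lp1..Lp2, p y / ρ) * p z)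
      = -k * (∫ y in Lp1..Lp2, p y / ρ)^2
    ∧ T * (∫ z in (0:ℝ)..L, (p' z / ρ) * w' z)
        + (1/ρ) * (∫ z in (0:ℝ)..L,
            (T * w'' z - k * g z * ∫ y in Lp1..Lp2, p y / ρ) * p z)
      ≤ 0 := by
  have hL : 0 ≤ L := hp1.trans (hp12.le.trans hp2)
  have hpc : ContinuousOn p (Icc 0 L) := fun z hz ↦ (hp z hz).continuousWithinAt
  have hgp : (fun z ↦ g z * p z) = (Icc Lp1 Lp2).indicator p := by
    ext z; simp [hg, indicator_apply, mem_Icc]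
  have hgpi : IntervalIntegrable (fun z ↦ g z * p z) volume 0 L := by
    rw [hgp]; exact (hpc.intervalIntegrable_of_Icc hL).indicator measurableSet_Icc
  have hwpi : IntervalIntegrable (fun z ↦ w'' z * p z) volume 0 L :=
    (hw''.mul hpc).intervalIntegrable_of_Icc hL
  have hparts : (∫ z in (0:ℝ)..L, w'' z * p z) + ∫ z in (0:ℝ)..L, w' z * p' z = 0 :=
    integral_deriv_mul_add_integral_mul_deriv_eq_zero hL hw' hp hw'' hp' hwL hp0
  have hactuator : ∫ z in (0:ℝ)..L, g z * p z = ∫ y in Lp1..Lp2, p y := by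
    rw [hgp, intervalIntegral_indicator_Icc_s2 hp1 hp12.le hp2]
  set C := ∫ y in Lp1..Lp2, p y / ρ
  have hC : C = (∫ y in Lp1..Lp2, p y) / ρ := intervalIntegral.integral_div ρ p
  have hkinetic : ∫ z in (0:ℝ)..L, (p' z / ρ) * w' z = (∫ z in (0:ℝ)..L, w' z * p' z) / ρ := by
    rw [← intervalIntegral.integral_div]; congr 1; ext z; ring
  have hpotential : ∫ z in (0:ℝ)..L, (T * w'' z - k * g z * C) * p z
      = T * (∫ z in (0:ℝ)..L, w'' z * p z) - k * C * ∫ z in (0:ℝ)..L, g z * p z := by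
    rw [← intervalIntegral.integral_const_mul, ← intervalIntegral.integral_const_mul,
      ← intervalIntegral.integral_sub (hwpi.const_mul T) (hgpi.const_mul (k * C))]
    congr 1; ext z; ring
  have heq : T * (∫ z in (0:ℝ)..L, (p' z / ρ) * w' z)
      + (1/ρ) * (∫ z in (0:ℝ)..L, (T * w'' z - k * g z * C) * p z) = -k * C ^ 2 := by
    rw [hkinetic, hpotential, hactuator]
    linear_combination (T / ρ) * hparts + k * C * hC
  exact ⟨heq, heq.trans_le (by rw [neg_mul, neg_nonpos]; positivity)⟩

/-- Dissipativity of the observer-error operator with respect to the energy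
inner product: `⟨Aχ, χ⟩_X = −k (∫_{Lp1}^{Lp2} p/ρ dy)² ≤ 0`. -/
theorem observer_error_operator_dissipative
    (L T ρ k Lp1 Lp2 : ℝ)
    (hL : 0 < L) (hT : 0 < T) (hρ : 0 < ρ) (hk : 0 < k)
    (hp1 : 0 ≤ Lp1) (hp12 : Lp1 < Lp2) (hp2 : Lp2 ≤ L)
    (g : ℝ → ℝ) (hg : ∀ z, g z = if Lp1 ≤ z ∧ z ≤ Lp2 then 1 else 0)
    (w w' w'' p p' : ℝ → ℝ)
    -- w is twice continuously differentiable on [0,L]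
    (hw : ∀ z ∈ Icc (0:ℝ) L, HasDerivWithinAt w (w' z) (Icc 0 L) z)
    (hw' : ∀ z ∈ Icc (0:ℝ) L, HasDerivWithinAt w' (w'' z) (Icc 0 L) z)
    (hw'' : ContinuousOn w'' (Icc 0 L))
    -- p is continuously differentiable on [0,L]
    (hp : ∀ z ∈ Icc (0:ℝ) L, HasDerivWithinAt p (p' z) (Icc 0 L) z)
    (hp' : ContinuousOn p' (Icc 0 L))
    -- boundary conditions
    (hw0 : w 0 = 0) (hwL : w' L = 0) (hp0 : p 0 = 0) :
    T * (∫ z in (0:ℝ)..L, (p' z / ρ) * w' z)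
        + (1/ρ) * (∫ z in (0:ℝ)..L,
            (T * w'' z - k * g z * ∫ y in Lp1..Lp2, p y / ρ) * p z)
      = -k * (∫ y in Lp1..Lp2, p y / ρ)^2
    ∧ T * (∫ z in (0:ℝ)..L, (p' z / ρ) * w' z)
        + (1/ρ) * (∫ z in (0:ℝ)..L,
            (T * w'' z - k * g z * ∫ y in Lp1..Lp2, p y / ρ) * p z)
      ≤ 0 :=
  observer_error_operator_dissipative_general L T ρ k Lp1 Lp2 hk hp1 hp12 hp2 g hg w' w'' p p' hw'
    hw'' hp hp' hwL hp0
end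

section
/- Boundedness of the inverse of the observer-error operator: There exists a constant C > 0, depending only on T, ρ, k, L, L_{p1}, L_{p2}, such that for every continuously differentiable f : [0,L] → ℝ with f(0) = 0 and every continuous h : [0,L] → ℝ, the functions p̃ = ρ·f, G = ∫_{L_{p1}}^{L_{p2}} f(y) dy, W₁(z) = −(1/T)·( ∫_z^L h(y) dy + k·G·∫_z^L g(y) dy ) and W(z) = ∫₀^z W₁(y) dy satisfy ∫₀^L W² dz + ∫₀^L W₁² dz + ∫₀^L ( (h(z) + k·g(z)·G)/T )² dz + ∫₀^L p̃² dz + ∫₀^L (p̃')² dz ≤ C·( ∫₀^L f² dz + ∫₀^L (f')² dz + ∫₀^L h² dz ). In other words, the inverse operator A⁻¹ maps bounded sets of the state space into bounded sets of (H² ∩ H¹_C) × H¹_C. -/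
/-!
Everything follows from Cauchy–Schwarz on subintervals of `[0, L]` together with `|g| ≤ 1`.
It gives `G² ≤ L ‖f‖²` and the uniform bound `W₁(z)² ≤ 2L (‖h‖² + L k² G²) / T²`; integrating
this sup bound, and the one it induces on the primitive `W`, controls the `W` and `W₁` terms,
while `(W'')² = ((h + k g G) / T)²` is dominated pointwise by `2 (h² + k² G²) / T²`. The `p̃` terms
are `ρ²` times the squared `H¹` norm of `f`.
-/

open Real MeasureTheory Set

theorem sq_integral_le_mul_integral_sq {u : ℝ → ℝ} {a b : ℝ} (hab : a ≤ b)
    (hu : IntervalIntegrable u volume a b)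
    (hu2 : IntervalIntegrable (fun x => u x ^ 2) volume a b) :
    (∫ x in a..b, u x) ^ 2 ≤ (b - a) * ∫ x in a..b, u x ^ 2 := by
  rcases hab.eq_or_lt with rfl | hlt
  · simp
  have : IsFiniteMeasure (volume.restrict (uIoc a b)) :=
    isFiniteMeasure_restrict.2 (by simp [uIoc_of_le hab])
  have : NeZero (volume.restrict (uIoc a b)) := ⟨by simp [uIoc_of_le hab, hlt]⟩
  have hjensen : (⨍ x in a..b, u x) ^ 2 ≤ ⨍ x in a..b, u x ^ 2 :=
    (even_two.convexOn_pow (𝕜 := ℝ)).map_average_le (continuousOn_pow 2) isClosed_univ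
      (by simp) hu.def' hu2.def'
  rw [interval_average_eq_div, interval_average_eq_div, div_pow,
    div_le_div_iff₀ (by positivity) (sub_pos.2 hlt)] at hjensen
  nlinarith [sub_pos.2 hlt]

theorem integral_le_mul_of_abs_le {f : ℝ → ℝ} {a b C : ℝ} (hab : a ≤ b)
    (h : ∀ x ∈ Icc a b, |f x| ≤ C) : ∫ x in a..b, f x ≤ (b - a) * C := by
  have hbound := intervalIntegral.norm_integral_le_of_norm_le_const (f := f) fun x hx =>
    (Real.norm_eq_abs _).trans_le (h x (uIcc_of_le hab ▸ uIoc_subset_uIcc hx))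
  rw [Real.norm_eq_abs, abs_of_nonneg (sub_nonneg.2 hab), mul_comm] at hbound
  exact (le_abs_self _).trans hbound

theorem sq_integral_le_of_sq_le {u : ℝ → ℝ} {a b S : ℝ} (hab : a ≤ b) (hS : 0 ≤ S)
    (h : ∀ x ∈ Icc a b, u x ^ 2 ≤ S) : (∫ x in a..b, u x) ^ 2 ≤ (b - a) ^ 2 * S := by
  have hbound := intervalIntegral.norm_integral_le_of_norm_le_const (f := u) fun x hx =>
    (Real.norm_eq_abs _).trans_le (abs_le_sqrt (h x (uIcc_of_le hab ▸ uIoc_subset_uIcc hx)))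
  rw [Real.norm_eq_abs, abs_of_nonneg (sub_nonneg.2 hab)] at hbound
  calc (∫ x in a..b, u x) ^ 2 = |∫ x in a..b, u x| ^ 2 := (sq_abs _).symm
    _ ≤ (√S * (b - a)) ^ 2 := pow_le_pow_left₀ (abs_nonneg _) hbound 2
    _ = (b - a) ^ 2 * S := by rw [mul_pow, sq_sqrt hS, mul_comm]

theorem sq_integral_le_mul_integral_sq_of_subinterval {u : ℝ → ℝ} {a b c d : ℝ}
    (hca : c ≤ a) (hab : a ≤ b) (hbd : b ≤ d) (hu : ContinuousOn u (Icc c d)) :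
    (∫ x in a..b, u x) ^ 2 ≤ (d - c) * ∫ x in c..d, u x ^ 2 := by
  have hsub : uIcc a b ⊆ Icc c d := uIcc_of_le hab ▸ Icc_subset_Icc hca hbd
  have hcd : uIcc c d = Icc c d := uIcc_of_le (hca.trans (hab.trans hbd))
  calc (∫ x in a..b, u x) ^ 2 ≤ (b - a) * ∫ x in a..b, u x ^ 2 :=
        sq_integral_le_mul_integral_sq hab ((hu.mono hsub).intervalIntegrable)
          (((hu.pow 2).mono hsub).intervalIntegrable)
    _ ≤ (d - c) * ∫ x in c..d, u x ^ 2 :=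
        mul_le_mul (by linarith)
          (intervalIntegral.integral_mono_interval hca hab hbd (ae_of_all _ fun _ => sq_nonneg _)
            ((hu.pow 2).mono hcd.subset).intervalIntegrable)
          (intervalIntegral.integral_nonneg hab fun _ _ => sq_nonneg _) (by linarith)

theorem integral_sq_primitive_le {u : ℝ → ℝ} {L S : ℝ} (hL : 0 ≤ L)
    (hS : ∀ x ∈ Icc 0 L, u x ^ 2 ≤ S) :
    ∫ z in (0:ℝ)..L, (∫ y in (0:ℝ)..z, u y) ^ 2 ≤ L ^ 3 * S := by
  have hS0 : 0 ≤ S := (sq_nonneg _).trans (hS 0 ⟨le_rfl, hL⟩)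
  have hprim : ∀ z ∈ Icc 0 L, |(∫ y in (0:ℝ)..z, u y) ^ 2| ≤ L ^ 2 * S := fun z hz => by
    rw [abs_sq]
    calc (∫ y in (0:ℝ)..z, u y) ^ 2 ≤ (z - 0) ^ 2 * S :=
          sq_integral_le_of_sq_le hz.1 hS0 fun x hx => hS x ⟨hx.1, hx.2.trans hz.2⟩
      _ ≤ L ^ 2 * S := by gcongr <;> linarith [hz.1, hz.2]
  calc _ ≤ (L - 0) * (L ^ 2 * S) := integral_le_mul_of_abs_le hL hprim
    _ = L ^ 3 * S := by ring

theorem integral_sq_primitive_add_integral_sq_le {u : ℝ → ℝ} {L S : ℝ} (hL : 0 ≤ L)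
    (hS : ∀ x ∈ Icc 0 L, u x ^ 2 ≤ S) :
    (∫ z in (0:ℝ)..L, (∫ y in (0:ℝ)..z, u y) ^ 2) + ∫ z in (0:ℝ)..L, u z ^ 2
      ≤ (L ^ 3 + L) * S := by
  have hu : ∫ z in (0:ℝ)..L, u z ^ 2 ≤ (L - 0) * S :=
    integral_le_mul_of_abs_le hL fun z hz => (abs_sq (u z)).trans_le (hS z hz)
  linarith [integral_sq_primitive_le hL hS]

theorem sq_integral_add_mul_integral_le {h g : ℝ → ℝ} {L c z : ℝ}
    (hh : ContinuousOn h (Icc 0 L)) (hg : ∀ y, |g y| ≤ 1) (hz : z ∈ Icc 0 L) :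
    ((∫ y in z..L, h y) + c * ∫ y in z..L, g y) ^ 2
      ≤ 2 * L * ((∫ y in (0:ℝ)..L, h y ^ 2) + L * c ^ 2) := by
  have hh2 : (∫ y in z..L, h y) ^ 2 ≤ (L - 0) * ∫ y in (0:ℝ)..L, h y ^ 2 :=
    sq_integral_le_mul_integral_sq_of_subinterval hz.1 hz.2 le_rfl hh
  have hg2 : (∫ y in z..L, g y) ^ 2 ≤ (L - z) ^ 2 * 1 :=
    sq_integral_le_of_sq_le hz.2 zero_le_one fun y _ => sq_le_one_iff_abs_le_one _ |>.2 (hg y)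
  have hLz : (L - z) ^ 2 ≤ L ^ 2 := by gcongr <;> linarith [hz.1, hz.2]
  calc _ ≤ 2 * ((∫ y in z..L, h y) ^ 2 + c ^ 2 * (∫ y in z..L, g y) ^ 2) := by
        rw [← mul_pow]; exact add_sq_le
    _ ≤ 2 * ((L - 0) * (∫ y in (0:ℝ)..L, h y ^ 2) + c ^ 2 * ((L - z) ^ 2 * 1)) := by
        gcongr
    _ ≤ 2 * L * ((∫ y in (0:ℝ)..L, h y ^ 2) + L * c ^ 2) := by nlinarith [sq_nonneg c]

theorem integral_sq_add_mul_le {h g : ℝ → ℝ} {L c : ℝ} (hL : 0 ≤ L)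
    (hh : ContinuousOn h (Icc 0 L)) (hg : ∀ y, |g y| ≤ 1) :
    ∫ z in (0:ℝ)..L, (h z + c * g z) ^ 2 ≤ 2 * ((∫ z in (0:ℝ)..L, h z ^ 2) + L * c ^ 2) := by
  have hh2 : IntervalIntegrable (fun z => h z ^ 2) volume 0 L :=
    ((hh.pow 2).mono (uIcc_of_le hL).subset).intervalIntegrable
  have hpt : ∀ z, (h z + c * g z) ^ 2 ≤ 2 * h z ^ 2 + 2 * c ^ 2 := fun z => by
    have : (c * g z) ^ 2 ≤ c ^ 2 := by
      rw [mul_pow]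
      exact mul_le_of_le_one_right (sq_nonneg c) ((sq_le_one_iff_abs_le_one _).2 (hg z))
    linarith [add_sq_le (a := h z) (b := c * g z)]
  -- `g` is not assumed measurable: only the dominating integrand is known to be integrable.
  calc _ ≤ ∫ z in (0:ℝ)..L, (2 * h z ^ 2 + 2 * c ^ 2) := by
        rw [intervalIntegral.integral_of_le hL, intervalIntegral.integral_of_le hL]
        exact integral_mono_of_nonneg (ae_of_all _ fun _ => sq_nonneg _)
          ((hh2.const_mul 2).add intervalIntegrable_const).1 (ae_of_all _ hpt)
    _ = 2 * ((∫ z in (0:ℝ)..L, h z ^ 2) + L * c ^ 2) := by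
        rw [intervalIntegral.integral_add (hh2.const_mul 2) intervalIntegrable_const,
          intervalIntegral.integral_const_mul, intervalIntegral.integral_const, smul_eq_mul]
        ring

theorem integral_sq_resolvent_state_le {h g W₁ W : ℝ → ℝ} {L T c : ℝ} (hL : 0 ≤ L)
    (hh : ContinuousOn h (Icc 0 L)) (hg : ∀ y, |g y| ≤ 1)
    (hW₁ : ∀ z, W₁ z = -(1 / T) * ((∫ y in z..L, h y) + c * ∫ y in z..L, g y))
    (hW : ∀ z, W z = ∫ y in (0:ℝ)..z, W₁ y) :
    (∫ z in (0:ℝ)..L, W z ^ 2) + (∫ z in (0:ℝ)..L, W₁ z ^ 2)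
        + ∫ z in (0:ℝ)..L, ((h z + c * g z) / T) ^ 2
      ≤ 2 * (L ^ 4 + L ^ 2 + 1) / T ^ 2 * ((∫ z in (0:ℝ)..L, h z ^ 2) + L * c ^ 2) := by
  set D := (∫ z in (0:ℝ)..L, h z ^ 2) + L * c ^ 2
  have hW₁S : ∀ z ∈ Icc 0 L, W₁ z ^ 2 ≤ 2 * L * D / T ^ 2 := fun z hz => by
    rw [hW₁, mul_pow, neg_sq, div_pow, one_pow, one_div_mul_eq_div]
    exact div_le_div_of_nonneg_right (sq_integral_add_mul_integral_le hh hg hz) (sq_nonneg T)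
  have hWW₁ : (∫ z in (0:ℝ)..L, W z ^ 2) + ∫ z in (0:ℝ)..L, W₁ z ^ 2
      ≤ (L ^ 3 + L) * (2 * L * D / T ^ 2) := by
    simpa only [hW] using integral_sq_primitive_add_integral_sq_le hL hW₁S
  have hWpp : ∫ z in (0:ℝ)..L, ((h z + c * g z) / T) ^ 2 ≤ 2 * D / T ^ 2 := by
    simp only [div_pow, intervalIntegral.integral_div]
    exact div_le_div_of_nonneg_right (integral_sq_add_mul_le hL hh hg) (sq_nonneg T)
  linarith [show (L ^ 3 + L) * (2 * L * D / T ^ 2) + 2 * D / T ^ 2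
    = 2 * (L ^ 4 + L ^ 2 + 1) / T ^ 2 * D by ring]

theorem inverse_observer_error_operator_bounded_general
    (L T ρ k Lp1 Lp2 : ℝ)
    (hL : 0 < L) (hT : 0 < T)
    (hp1 : 0 ≤ Lp1) (hp12 : Lp1 < Lp2) (hp2 : Lp2 ≤ L)
    (g : ℝ → ℝ) (hg : ∀ z, g z = if Lp1 ≤ z ∧ z ≤ Lp2 then 1 else 0) :
    ∃ C : ℝ, 0 < C ∧
      ∀ (f f' h : ℝ → ℝ),
        (∀ z ∈ Icc (0:ℝ) L, HasDerivWithinAt f (f' z) (Icc 0 L) z) →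
        ContinuousOn f' (Icc 0 L) →
        f 0 = 0 →
        ContinuousOn h (Icc 0 L) →
        ∀ (G : ℝ), G = (∫ y in Lp1..Lp2, f y) →
        ∀ (p W₁ W : ℝ → ℝ),
          (∀ z, p z = ρ * f z) →
          (∀ z, W₁ z = -(1/T) * ((∫ y in z..L, h y) + k * G * ∫ y in z..L, g y)) →
          (∀ z, W z = ∫ y in (0:ℝ)..z, W₁ y) →
          (∫ z in (0:ℝ)..L, (W z)^2) + (∫ z in (0:ℝ)..L, (W₁ z)^2)
            + (∫ z in (0:ℝ)..L, ((h z + k * g z * G) / T)^2)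
            + (∫ z in (0:ℝ)..L, (p z)^2) + (∫ z in (0:ℝ)..L, (ρ * f' z)^2)
          ≤ C * ((∫ z in (0:ℝ)..L, (f z)^2) + (∫ z in (0:ℝ)..L, (f' z)^2)
            + (∫ z in (0:ℝ)..L, (h z)^2)) := by
  refine ⟨2 * (L ^ 4 + L ^ 2 + 1) * (1 + k ^ 2 * L ^ 2) / T ^ 2 + ρ ^ 2, by positivity, ?_⟩
  intro f f' h hf _ _ hh G hG p W₁ W hp hW₁ hW
  have hg1 : ∀ z, |g z| ≤ 1 := fun z => by rw [hg]; split_ifs <;> simp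
  have hstate := integral_sq_resolvent_state_le hL.le hh hg1 hW₁ hW
  have hp' : (∫ z in (0:ℝ)..L, p z ^ 2) + ∫ z in (0:ℝ)..L, (ρ * f' z) ^ 2
      = ρ ^ 2 * ((∫ z in (0:ℝ)..L, f z ^ 2) + ∫ z in (0:ℝ)..L, f' z ^ 2) := by
    simp only [hp, mul_pow, intervalIntegral.integral_const_mul, mul_add]
  have hG2 : G ^ 2 ≤ L * ∫ z in (0:ℝ)..L, f z ^ 2 := by
    simpa [hG] using sq_integral_le_mul_integral_sq_of_subinterval hp1 hp12.le hp2
      fun z hz => (hf z hz).continuousWithinAt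
  simp only [mul_right_comm k _ G]
  set If := ∫ z in (0:ℝ)..L, f z ^ 2
  set If' := ∫ z in (0:ℝ)..L, f' z ^ 2
  set Ih := ∫ z in (0:ℝ)..L, h z ^ 2
  have hIf : 0 ≤ If := intervalIntegral.integral_nonneg hL.le fun _ _ => sq_nonneg _
  have hIf' : 0 ≤ If' := intervalIntegral.integral_nonneg hL.le fun _ _ => sq_nonneg _
  have hIh : 0 ≤ Ih := intervalIntegral.integral_nonneg hL.le fun _ _ => sq_nonneg _
  have hD : Ih + L * (k * G) ^ 2 ≤ (1 + k ^ 2 * L ^ 2) * (If + If' + Ih) := by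
    nlinarith [mul_le_mul_of_nonneg_left hG2 (by positivity : 0 ≤ k ^ 2 * L),
      mul_nonneg (by positivity : 0 ≤ k ^ 2 * L ^ 2) (add_nonneg hIf' hIh)]
  calc _ ≤ 2 * (L ^ 4 + L ^ 2 + 1) / T ^ 2 * (Ih + L * (k * G) ^ 2) + ρ ^ 2 * (If + If') := by
        linarith
    _ ≤ 2 * (L ^ 4 + L ^ 2 + 1) / T ^ 2 * ((1 + k ^ 2 * L ^ 2) * (If + If' + Ih))
          + ρ ^ 2 * (If + If' + Ih) := by
        gcongr _ * ?_ + _ * ?_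
        linarith
    _ = _ := by ring

/-- Boundedness of the inverse of the observer-error operator: there is a
constant `C > 0`, depending only on the physical parameters, bounding the
`(H² ∩ H¹_C) × H¹_C`-norm of the solution `(W, p̃)` of the resolvent equation
`A(W, p̃) = (f, h)` in terms of the `H¹ × L²`-norm of the data `(f, h)`. -/
theorem inverse_observer_error_operator_bounded
    (L T ρ k Lp1 Lp2 : ℝ)
    (hL : 0 < L) (hT : 0 < T) (hρ : 0 < ρ) (hk : 0 < k)
    (hp1 : 0 ≤ Lp1) (hp12 : Lp1 < Lp2) (hp2 : Lp2 ≤ L)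
    (g : ℝ → ℝ) (hg : ∀ z, g z = if Lp1 ≤ z ∧ z ≤ Lp2 then 1 else 0) :
    ∃ C : ℝ, 0 < C ∧
      ∀ (f f' h : ℝ → ℝ),
        (∀ z ∈ Icc (0:ℝ) L, HasDerivWithinAt f (f' z) (Icc 0 L) z) →
        ContinuousOn f' (Icc 0 L) →
        f 0 = 0 →
        ContinuousOn h (Icc 0 L) →
        ∀ (G : ℝ), G = (∫ y in Lp1..Lp2, f y) →
        ∀ (p W₁ W : ℝ → ℝ),
          (∀ z, p z = ρ * f z) →
          (∀ z, W₁ z = -(1/T) * ((∫ y in z..L, h y) + k * G * ∫ y in z..L, g y)) →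
          (∀ z, W z = ∫ y in (0:ℝ)..z, W₁ y) →
          (∫ z in (0:ℝ)..L, (W z)^2) + (∫ z in (0:ℝ)..L, (W₁ z)^2)
            + (∫ z in (0:ℝ)..L, ((h z + k * g z * G) / T)^2)
            + (∫ z in (0:ℝ)..L, (p z)^2) + (∫ z in (0:ℝ)..L, (ρ * f' z)^2)
          ≤ C * ((∫ z in (0:ℝ)..L, (f z)^2) + (∫ z in (0:ℝ)..L, (f' z)^2)
            + (∫ z in (0:ℝ)..L, (h z)^2)) :=
  inverse_observer_error_operator_bounded_general L T ρ k Lp1 Lp2 hL hT hp1 hp12 hp2 g hg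
end

section
/- Actuator-length condition guaranteeing non-vanishing modal integrals: Let L > 0, let k be a positive integer, set ω_k = (k − 1/2)·π/L, and let 0 ≤ L_{p1} < L_{p2} ≤ L. If for every positive integer j one has L_{p2} − L_{p1} ≠ 4·L·j/(2k − 1) and L_{p2} + L_{p1} ≠ 4·L·j/(2k − 1), then ∫_{L_{p1}}^{L_{p2}} sin(ω_k·z) dz ≠ 0. -/
/-!
Since `∫_a^b sin(ωz) dz = (cos(ωa) − cos(ωb))/ω`, the integral vanishes exactly when
`cos(ωa) = cos(ωb)`, i.e. when `ω(b − a)` or `ω(b + a)` is an integer multiple of `2π`.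
For `ω = (k − 1/2)π/L` and a positive length `d`, the identity `ωd = 2nπ` reads
`d = 4Ln/(2k − 1)` with `n` a positive integer, which the hypotheses exclude for both
`d = b − a` and `d = b + a`.
-/

open Real Set intervalIntegral

theorem integral_sin_mul_eq_zero_iff {ω : ℝ} (hω : ω ≠ 0) (a b : ℝ) :
    (∫ z in a..b, sin (ω * z)) = 0 ↔ cos (ω * a) = cos (ω * b) := by
  rw [integral_comp_mul_left _ hω, integral_sin, smul_eq_mul,
    mul_eq_zero, or_iff_right (inv_ne_zero hω), sub_eq_zero]

theorem exists_int_of_cos_mul_eq_cos_mul {ω a b : ℝ} (h : cos (ω * a) = cos (ω * b)) :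
    ∃ n : ℤ, ω * (b - a) = 2 * n * π ∨ ω * (b + a) = 2 * n * π := by
  obtain ⟨n, hn | hn⟩ := cos_eq_cos_iff.1 h
  · exact ⟨n, Or.inl (by linear_combination hn)⟩
  · exact ⟨n, Or.inr (by linear_combination hn)⟩

theorem exists_pos_nat_eq_of_mul_eq_int_mul_two_pi {L d : ℝ} (hL : 0 < L) {k : ℕ} (hk : 0 < k)
    (hd : 0 < d) {n : ℤ} (h : ((k : ℝ) - 1/2) * π / L * d = 2 * n * π) :
    ∃ j : ℕ, 0 < j ∧ d = 4 * L * j / (2 * k - 1) := by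
  have hk' : (0 : ℝ) < 2 * k - 1 := by
    have : (1 : ℝ) ≤ k := by exact_mod_cast hk
    linarith
  have hdn : (2 * k - 1) * d = 4 * L * n := by
    field_simp at h
    nlinarith [pi_pos]
  have hn : 0 < n := by
    have : (0 : ℝ) < n := by nlinarith [mul_pos hk' hd]
    exact_mod_cast this
  lift n to ℕ using hn.le
  refine ⟨n, by exact_mod_cast hn, ?_⟩
  rw [eq_div_iff hk'.ne']
  push_cast at hdn
  linarith

theorem actuator_length_condition_nonvanishing_integral_general
    (L : ℝ) (hL : 0 < L)
    (k : ℕ) (hk : 0 < k)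
    (ω : ℝ) (hω : ω = ((k : ℝ) - 1/2) * π / L)
    (Lp1 Lp2 : ℝ) (hp1 : 0 ≤ Lp1) (hp12 : Lp1 < Lp2)
    (hlen : ∀ j : ℕ, 0 < j →
      Lp2 - Lp1 ≠ 4 * L * (j : ℝ) / (2 * (k : ℝ) - 1)
      ∧ Lp2 + Lp1 ≠ 4 * L * (j : ℝ) / (2 * (k : ℝ) - 1)) :
    (∫ z in Lp1..Lp2, Real.sin (ω * z)) ≠ 0 := by
  have hω0 : ω ≠ 0 := by
    have : (1 : ℝ) ≤ k := by exact_mod_cast hk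
    rw [hω]
    exact div_ne_zero (mul_ne_zero (by linarith) pi_ne_zero) hL.ne'
  intro h
  subst hω
  obtain ⟨n, hn | hn⟩ :=
    exists_int_of_cos_mul_eq_cos_mul ((integral_sin_mul_eq_zero_iff hω0 _ _).1 h)
  · obtain ⟨j, hj, hd⟩ := exists_pos_nat_eq_of_mul_eq_int_mul_two_pi hL hk (by linarith) hn
    exact (hlen j hj).1 hd
  · obtain ⟨j, hj, hd⟩ := exists_pos_nat_eq_of_mul_eq_int_mul_two_pi hL hk (by linarith) hn
    exact (hlen j hj).2 hd

/-- Actuator-length condition guaranteeing non-vanishing modal integrals: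
if `Lp2 − Lp1 ≠ 4Lj/(2k−1)` and `Lp2 + Lp1 ≠ 4Lj/(2k−1)` for every positive
integer `j`, then `∫_{Lp1}^{Lp2} sin(ω_k z) dz ≠ 0` for `ω_k = (k−1/2)π/L`. -/
theorem actuator_length_condition_nonvanishing_integral
    (L : ℝ) (hL : 0 < L)
    (k : ℕ) (hk : 0 < k)
    (ω : ℝ) (hω : ω = ((k : ℝ) - 1/2) * π / L)
    (Lp1 Lp2 : ℝ) (hp1 : 0 ≤ Lp1) (hp12 : Lp1 < Lp2) (hp2 : Lp2 ≤ L)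
    (hlen : ∀ j : ℕ, 0 < j →
      Lp2 - Lp1 ≠ 4 * L * (j : ℝ) / (2 * (k : ℝ) - 1)
      ∧ Lp2 + Lp1 ≠ 4 * L * (j : ℝ) / (2 * (k : ℝ) - 1)) :
    (∫ z in Lp1..Lp2, Real.sin (ω * z)) ≠ 0 :=
  actuator_length_condition_nonvanishing_integral_general L hL k hk ω hω Lp1 Lp2 hp1 hp12 hlen
end

section
/- Vanishing of an ℓ²-coefficient trigonometric series with nonzero modal weights: Let L > 0, ϑ > 0 and 0 ≤ a < b ≤ L. For positive integers k set ω_k = (k − 1/2)·π/L and γ_k = ∫_a^b sin(ω_k·z) dz, and assume γ_k ≠ 0 for every k ≥ 1. Let (a_k)_{k≥1} and (b_k)_{k≥1} be real sequences with Σ_{k=1}^∞ (a_k² + b_k²) < ∞. If for every t ≥ 0 the family ( (a_k·cos(ω_k·ϑ·t) + b_k·sin(ω_k·ϑ·t))·γ_k )_{k≥1} is summable with sum equal to 0, then a_k = 0 and b_k = 0 for every k ≥ 1. -/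
open Real Set intervalIntegral

/-!
After the time change `t = x · 2L / (πϑ)` the frequencies `ω (k + 1) ϑ` become the odd integers
`2k + 1`, so the hypothesis says that a trigonometric series with coefficients `a_k γ_k`, `b_k γ_k`
vanishes on `[0, 2π]`. Since `|γ_k| ≤ 2 / ω_k` is square summable, these coefficients are absolutely
summable by Cauchy–Schwarz, so the series may be multiplied by `cos ((2n+1) x)` or `sin ((2n+1) x)`
and integrated term by term over a period; orthogonality leaves `π a_n γ_n = π b_n γ_n = 0`.
-/

theorem integral_cos_int_mul_zero_two_pi (m : ℤ) :
    ∫ x in 0..2 * π, cos (m * x) = if m = 0 then 2 * π else 0 := by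
  split_ifs with hm
  · simp [hm]
  · rw [integral_comp_mul_left (fun x => cos x) (Int.cast_ne_zero.2 hm), integral_cos, mul_zero,
      sin_zero, sub_zero, ← mul_assoc, show (m : ℝ) * 2 = ((2 * m : ℤ) : ℝ) by push_cast; ring,
      sin_int_mul_pi, smul_zero]

theorem integral_sin_int_mul_zero_two_pi (m : ℤ) : ∫ x in 0..2 * π, sin (m * x) = 0 := by
  rcases eq_or_ne m 0 with rfl | hm
  · simp
  · rw [integral_comp_mul_left (fun x => sin x) (Int.cast_ne_zero.2 hm), integral_sin, mul_zero,
      cos_zero, cos_int_mul_two_pi, sub_self, smul_zero]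

theorem integral_cos_nat_mul_mul_cos_nat_mul {m n : ℕ} (hm : m ≠ 0) :
    ∫ x in 0..2 * π, cos (m * x) * cos (n * x) = if m = n then π else 0 := by
  have h (x : ℝ) : cos (m * x) * cos (n * x) =
      (cos (((m - n : ℤ) : ℝ) * x) + cos (((m + n : ℤ) : ℝ) * x)) / 2 := by
    push_cast
    rw [sub_mul, add_mul, cos_sub, cos_add]
    ring
  simp_rw [h]
  rw [integral_div, integral_add ((by fun_prop : Continuous _).intervalIntegrable _ _)
      ((by fun_prop : Continuous _).intervalIntegrable _ _), integral_cos_int_mul_zero_two_pi,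
    integral_cos_int_mul_zero_two_pi]
  split_ifs <;> first | omega | ring

theorem integral_sin_nat_mul_mul_sin_nat_mul {m n : ℕ} (hm : m ≠ 0) :
    ∫ x in 0..2 * π, sin (m * x) * sin (n * x) = if m = n then π else 0 := by
  have h (x : ℝ) : sin (m * x) * sin (n * x) =
      (cos (((m - n : ℤ) : ℝ) * x) - cos (((m + n : ℤ) : ℝ) * x)) / 2 := by
    push_cast
    rw [sub_mul, add_mul, cos_sub, cos_add]
    ring
  simp_rw [h]
  rw [integral_div, integral_sub ((by fun_prop : Continuous _).intervalIntegrable _ _)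
      ((by fun_prop : Continuous _).intervalIntegrable _ _), integral_cos_int_mul_zero_two_pi,
    integral_cos_int_mul_zero_two_pi]
  split_ifs <;> first | omega | ring

theorem integral_sin_nat_mul_mul_cos_nat_mul (m n : ℕ) :
    ∫ x in 0..2 * π, sin (m * x) * cos (n * x) = 0 := by
  have h (x : ℝ) : sin (m * x) * cos (n * x) =
      (sin (((m - n : ℤ) : ℝ) * x) + sin (((m + n : ℤ) : ℝ) * x)) / 2 := by
    push_cast
    rw [sub_mul, add_mul, sin_sub, sin_add]
    ring
  simp_rw [h]
  rw [integral_div, integral_add ((by fun_prop : Continuous _).intervalIntegrable _ _)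
      ((by fun_prop : Continuous _).intervalIntegrable _ _), integral_sin_int_mul_zero_two_pi,
    integral_sin_int_mul_zero_two_pi, add_zero, zero_div]

theorem integral_trig_mode_mul_cos {p q : ℕ} (hp : p ≠ 0) (c d : ℝ) :
    ∫ x in 0..2 * π, (c * cos (p * x) + d * sin (p * x)) * cos (q * x) =
      if p = q then c * π else 0 := by
  simp_rw [add_mul, mul_assoc]
  rw [integral_add ((by fun_prop : Continuous _).intervalIntegrable _ _)
      ((by fun_prop : Continuous _).intervalIntegrable _ _), integral_const_mul, integral_const_mul,
    integral_cos_nat_mul_mul_cos_nat_mul hp, integral_sin_nat_mul_mul_cos_nat_mul]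
  split_ifs <;> simp

theorem integral_trig_mode_mul_sin {p q : ℕ} (hp : p ≠ 0) (c d : ℝ) :
    ∫ x in 0..2 * π, (c * cos (p * x) + d * sin (p * x)) * sin (q * x) =
      if p = q then d * π else 0 := by
  simp_rw [add_mul, mul_assoc, mul_comm (cos _) (sin _)]
  rw [integral_add ((by fun_prop : Continuous _).intervalIntegrable _ _)
      ((by fun_prop : Continuous _).intervalIntegrable _ _), integral_const_mul, integral_const_mul,
    integral_sin_nat_mul_mul_sin_nat_mul hp, integral_sin_nat_mul_mul_cos_nat_mul]
  split_ifs <;> simp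

theorem abs_mul_cos_add_mul_sin_le (c d x : ℝ) : |c * cos x + d * sin x| ≤ |c| + |d| := by
  calc |c * cos x + d * sin x| ≤ |c| * |cos x| + |d| * |sin x| := by
        rw [← abs_mul, ← abs_mul]; exact abs_add_le _ _
    _ ≤ |c| * 1 + |d| * 1 := by gcongr <;> first | exact abs_cos_le_one x | exact abs_sin_le_one x
    _ = |c| + |d| := by ring

section TrigSeries

variable {c d : ℕ → ℝ} {m : ℕ → ℕ}

theorem hasSum_integral_trig_series_mul_eq_zero (hcd : Summable fun k => |c k| + |d k|)
    (hzero : ∀ x ∈ Ioc 0 (2 * π),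
      HasSum (fun k => c k * cos (m k * x) + d k * sin (m k * x)) 0)
    {g : ℝ → ℝ} (hg : Continuous g) (hg_le : ∀ x, |g x| ≤ 1) :
    HasSum (fun k => ∫ x in 0..2 * π, (c k * cos (m k * x) + d k * sin (m k * x)) * g x) 0 := by
  have hdom := intervalIntegral.hasSum_integral_of_dominated_convergence
    (μ := MeasureTheory.volume) (f := 0)
    (F := fun k x => (c k * cos (m k * x) + d k * sin (m k * x)) * g x)
    (fun k _ => |c k| + |d k|) (fun k => (by fun_prop : Continuous _).aestronglyMeasurable)
    (fun k => .of_forall fun x _ => by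
      rw [Real.norm_eq_abs, abs_mul]
      exact (mul_le_of_le_one_right (abs_nonneg _) (hg_le x)).trans
        (abs_mul_cos_add_mul_sin_le _ _ _))
    (.of_forall fun _ _ => hcd) intervalIntegrable_const
    (.of_forall fun x hx => by
      simpa using (hzero x (by rwa [uIoc_of_le two_pi_pos.le] at hx)).mul_right (g x))
  simpa using hdom

theorem trig_series_coeff_eq_zero (hm : Function.Injective m) (hm₀ : ∀ k, m k ≠ 0)
    (hcd : Summable fun k => |c k| + |d k|)
    (hzero : ∀ x ∈ Ioc 0 (2 * π),
      HasSum (fun k => c k * cos (m k * x) + d k * sin (m k * x)) 0)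
    (n : ℕ) : c n = 0 ∧ d n = 0 := by
  have hcos := hasSum_integral_trig_series_mul_eq_zero hcd hzero (g := fun x => cos (m n * x))
    (by fun_prop) fun _ => abs_cos_le_one _
  have hsin := hasSum_integral_trig_series_mul_eq_zero hcd hzero (g := fun x => sin (m n * x))
    (by fun_prop) fun _ => abs_sin_le_one _
  simp only [integral_trig_mode_mul_cos (hm₀ _), integral_trig_mode_mul_sin (hm₀ _),
    hm.eq_iff] at hcos hsin
  have hc := (hasSum_single n fun k hk => if_neg hk).unique hcos
  have hd := (hasSum_single n fun k hk => if_neg hk).unique hsin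
  rw [if_pos rfl] at hc hd
  exact ⟨(mul_eq_zero.1 hc).resolve_right pi_ne_zero, (mul_eq_zero.1 hd).resolve_right pi_ne_zero⟩

end TrigSeries

theorem summable_abs_mul_of_summable_sq {ι : Type*} {f g : ι → ℝ}
    (hf : Summable fun i => f i ^ 2) (hg : Summable fun i => g i ^ 2) :
    Summable fun i => |f i * g i| := by
  refine ((hf.add hg).div_const 2).of_nonneg_of_le (fun _ => abs_nonneg _) fun i => ?_
  rw [abs_mul, le_div_iff₀ two_pos, ← sq_abs (f i), ← sq_abs (g i)]
  linarith [two_mul_le_add_sq |f i| |g i|]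

theorem abs_integral_sin_mul_le {ω : ℝ} (hω : ω ≠ 0) (a b : ℝ) :
    |∫ z in a..b, sin (ω * z)| ≤ 2 / |ω| := by
  rw [integral_comp_mul_left (fun z => sin z) hω, integral_sin, smul_eq_mul, abs_mul, abs_inv,
    inv_mul_eq_div]
  gcongr
  linarith [abs_sub (cos (ω * a)) (cos (ω * b)), abs_cos_le_one (ω * a), abs_cos_le_one (ω * b)]

theorem summable_sq_integral_sin_add_half_mul {L : ℝ} (hL : 0 < L) (a b : ℝ) :
    Summable fun k : ℕ => (∫ z in a..b, sin ((k + 1 / 2) * π / L * z)) ^ 2 := by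
  have hp := (Real.summable_one_div_nat_add_rpow (1 / 2) 2).2 one_lt_two
  refine (hp.mul_left ((2 * L / π) ^ 2)).of_nonneg_of_le (fun _ => sq_nonneg _) fun k => ?_
  have hk : (0 : ℝ) < k + 1 / 2 := by positivity
  have hω : (0 : ℝ) < (k + 1 / 2) * π / L := by positivity
  calc (∫ z in a..b, sin ((k + 1 / 2) * π / L * z)) ^ 2
      ≤ (2 / |(k + 1 / 2) * π / L|) ^ 2 := by
        rw [← sq_abs]; gcongr; exact abs_integral_sin_mul_le hω.ne' a b
    _ = (2 * L / π) ^ 2 * (1 / |(k : ℝ) + 1 / 2| ^ (2 : ℝ)) := by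
        rw [abs_of_pos hω, abs_of_pos hk, rpow_two]; field_simp

theorem ell2_trig_series_vanishing_general
    (L ϑ La Lb : ℝ)
    (hL : 0 < L) (hϑ : 0 < ϑ)
    (ω γ : ℕ → ℝ)
    (hω : ∀ k : ℕ, ω k = ((k : ℝ) - 1/2) * π / L)
    (hγ : ∀ k : ℕ, γ k = ∫ z in La..Lb, Real.sin (ω k * z))
    (hγne : ∀ k : ℕ, 1 ≤ k → γ k ≠ 0)
    (a b : ℕ → ℝ)
    (hl2 : Summable (fun k : ℕ => (a (k + 1))^2 + (b (k + 1))^2))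
    (hsum : ∀ t : ℝ, 0 ≤ t →
      HasSum (fun k : ℕ =>
        (a (k + 1) * Real.cos (ω (k + 1) * ϑ * t)
          + b (k + 1) * Real.sin (ω (k + 1) * ϑ * t)) * γ (k + 1)) 0) :
    ∀ k : ℕ, 1 ≤ k → a k = 0 ∧ b k = 0 := by
  have hω_succ (k : ℕ) : ω (k + 1) = (k + 1 / 2) * π / L := by rw [hω]; push_cast; ring
  have hγ_sq : Summable fun k => γ (k + 1) ^ 2 := by
    simpa only [hγ, hω_succ] using summable_sq_integral_sin_add_half_mul hL La Lb
  have hcoeff : Summable fun k => |a (k + 1) * γ (k + 1)| + |b (k + 1) * γ (k + 1)| :=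
    (summable_abs_mul_of_summable_sq (hl2.of_nonneg_of_le (fun _ => sq_nonneg _)
      fun _ => le_add_of_nonneg_right (sq_nonneg _)) hγ_sq).add
    (summable_abs_mul_of_summable_sq (hl2.of_nonneg_of_le (fun _ => sq_nonneg _)
      fun _ => le_add_of_nonneg_left (sq_nonneg _)) hγ_sq)
  have hmode (k : ℕ) (x : ℝ) :
      ω (k + 1) * ϑ * (x * (2 * L / (π * ϑ))) = ((2 * k + 1 : ℕ) : ℝ) * x := by
    rw [hω_succ]; push_cast; field_simp
  have hseries : ∀ x ∈ Ioc 0 (2 * π), HasSum (fun k =>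
      a (k + 1) * γ (k + 1) * cos ((2 * k + 1 : ℕ) * x)
        + b (k + 1) * γ (k + 1) * sin ((2 * k + 1 : ℕ) * x)) 0 := by
    intro x hx
    simpa only [hmode, add_mul, mul_right_comm _ (γ _)] using
      hsum (x * (2 * L / (π * ϑ))) (by have := hx.1.le; positivity)
  rintro (_ | n) hn
  · omega
  obtain ⟨ha, hb⟩ := trig_series_coeff_eq_zero (m := fun k => 2 * k + 1)
    (fun _ _ h => by simpa using h) (fun _ => by omega) hcoeff hseries n
  exact ⟨(mul_eq_zero.1 ha).resolve_right (hγne _ le_add_self),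
    (mul_eq_zero.1 hb).resolve_right (hγne _ le_add_self)⟩

/-- Vanishing of an ℓ²-coefficient trigonometric series with nonzero modal
weights: if `Σ_{k≥1} (a_k cos(ω_k ϑ t) + b_k sin(ω_k ϑ t)) γ_k = 0` for all
`t ≥ 0`, with `γ_k = ∫_a^b sin(ω_k z) dz ≠ 0` and ℓ² coefficients, then all
coefficients vanish. -/
theorem ell2_trig_series_vanishing
    (L ϑ La Lb : ℝ)
    (hL : 0 < L) (hϑ : 0 < ϑ)
    (ha : 0 ≤ La) (hab : La < Lb) (hbL : Lb ≤ L)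
    (ω γ : ℕ → ℝ)
    (hω : ∀ k : ℕ, ω k = ((k : ℝ) - 1/2) * π / L)
    (hγ : ∀ k : ℕ, γ k = ∫ z in La..Lb, Real.sin (ω k * z))
    (hγne : ∀ k : ℕ, 1 ≤ k → γ k ≠ 0)
    (a b : ℕ → ℝ)
    (hl2 : Summable (fun k : ℕ => (a (k + 1))^2 + (b (k + 1))^2))
    (hsum : ∀ t : ℝ, 0 ≤ t →
      HasSum (fun k : ℕ =>
        (a (k + 1) * Real.cos (ω (k + 1) * ϑ * t)
          + b (k + 1) * Real.sin (ω (k + 1) * ϑ * t)) * γ (k + 1)) 0) :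
    ∀ k : ℕ, 1 ≤ k → a k = 0 ∧ b k = 0 :=
  ell2_trig_series_vanishing_general L ϑ La Lb hL hϑ ω γ hω hγ hγne a b hl2 hsum
end
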